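/- arXiv:1705.10963 — 2 statements merged into one kernel-verified Lean document; each statement's English description precedes it below -/
import Mathlib

section
/- For any a, p ∈ ℝ^d, the set T_{ap} of elements of Spun(d) whose associated rigid motion takes a to p satisfies T_{ap} = {γ + ½·e_{d+1}e_{d+2}·(i(p)γ − γ·i(a)) : γ ∈ Spin(d)}. -/
noncomputable section

open CliffordAlgebra

/-- The negative definite quadratic form `v ↦ -‖v‖²` on `ℝ^n`. -/
def Qn (n : ℕ) : QuadraticForm ℝ (Fin n → ℝ) :=
  QuadraticMap.weightedSumSquares ℝ (fun _ : Fin n => (-1 : ℝ))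

/-- The Clifford algebra `Cl_n = Cl(ℝ^n, -‖·‖²)`, with generators `e_1, …, e_n`
satisfying `e_j² = -1` and `e_je_k = -e_ke_j` for `j ≠ k`. -/
abbrev Cl (n : ℕ) := CliffordAlgebra (Qn n)

/-- The generators `e_1, …, e_n` of `Cl_n` (0-indexed). -/
def gC (n : ℕ) (j : Fin n) : Cl n := CliffordAlgebra.ι (Qn n) (Pi.single j 1)

/-- The conjugate `x̄ = α(t(x))`, where `α` is the grade involution and `t` the reversal. -/
def conjC (n : ℕ) (x : Cl n) : Cl n := reverse (involute x)

/-- The linear embedding `i : ℝ^n → Cl_n`. -/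
def iC (n : ℕ) (v : Fin n → ℝ) : Cl n := CliffordAlgebra.ι (Qn n) v

/-- Products of distinct generators of `Cl_n`, in increasing order of index. -/
def sprodC (n : ℕ) (s : Finset (Fin n)) : Cl n := ((s.sort (· ≤ ·)).map (gC n)).prod

/-- The even part `Cl_n^0`: the span of `1` and the products of an even number of
distinct generators. -/
def ClE0 (n : ℕ) : Submodule ℝ (Cl n) :=
  Submodule.span ℝ {x | ∃ s : Finset (Fin n), Even s.card ∧ x = sprodC n s}

/-- The span of the `m`-terms of `Cl_n`: real multiples of products of `m` distinct
generators. -/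
def mTermsC (n m : ℕ) : Submodule ℝ (Cl n) :=
  Submodule.span ℝ {x | ∃ s : Finset (Fin n), s.card = m ∧ x = sprodC n s}

/-- `Spin(n)` inside `Cl_n`. -/
def SpinC (n : ℕ) : Set (Cl n) :=
  {x | x ∈ ClE0 n ∧ x * conjC n x = 1 ∧
    ∀ v : Fin n → ℝ, ∃ w : Fin n → ℝ, x * iC n v * conjC n x = iC n w}

/-- The coefficient of `1` of an element of `Cl_n` (computed via the normalized trace
of left-multiplication, which agrees with the coefficient of `1` w.r.t. the standard
monomial basis since `dim Cl_n = 2^n`). -/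
def coeff1C (n : ℕ) (x : Cl n) : ℝ :=
  (2 ^ n : ℝ)⁻¹ * LinearMap.trace ℝ (Cl n) (LinearMap.mulLeft ℝ x)

/-- `X_d`, realized as the dual numbers over `Cl_{d+1}`; the dual-number generator `ε`
is central with `ε² = 0` and plays the role of `e_{d+2}`. -/
abbrev Xa (d : ℕ) := DualNumber (Cl (d + 1))

namespace X

variable (d : ℕ)

/-- `e_1, …, e_{d+1}` (0-indexed) inside `X_d`. -/
def e (j : Fin (d + 1)) : Xa d := TrivSqZeroExt.inl (gC (d + 1) j)

/-- `e_{d+2}`. -/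
def eps : Xa d := DualNumber.eps

/-- The generator `e_{d+1}`. -/
def eL : Xa d := e d (Fin.last d)

/-- The embedding of `ℝ^k` into `X_d` using the first `k` generators. -/
def iK (k : ℕ) (v : Fin k → ℝ) : Xa d :=
  TrivSqZeroExt.inl (CliffordAlgebra.ι (Qn (d + 1))
    (fun j : Fin (d + 1) => if h : (j : ℕ) < k then v ⟨j, h⟩ else 0))

/-- `i : ℝ^d → X_d`. -/
def iMap (v : Fin d → ℝ) : Xa d := iK d d v

/-- The conjugate `x̄ = α(t(x))` on `X_d`. -/
def conj (x : Xa d) : Xa d :=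
  TrivSqZeroExt.inl (conjC (d + 1) (TrivSqZeroExt.fst x)) +
    TrivSqZeroExt.inr (conjC (d + 1) (TrivSqZeroExt.snd x))

/-- The norm `N(x) = x·x̄`. -/
def Nm (x : Xa d) : Xa d := x * conj d x

/-- The generating family of `Z_d^0`: `e_1, …, e_d` and `e_{d+1}e_{d+2}`. -/
def zgen (j : Fin (d + 1)) : Xa d := if (j : ℕ) < d then e d j else eL d * eps d

/-- Products of distinct elements of a family, in increasing order of index. -/
def sprod (f : Fin (d + 1) → Xa d) (s : Finset (Fin (d + 1))) : Xa d :=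
  ((s.sort (· ≤ ·)).map f).prod

/-- `Z_d^0`: the span of `1` and the products of an even number of distinct elements
of `{e_1, …, e_d, e_{d+1}e_{d+2}}`. -/
def Z0 : Submodule ℝ (Xa d) :=
  Submodule.span ℝ {x | ∃ s : Finset (Fin (d + 1)), Even s.card ∧ x = sprod d (zgen d) s}

/-- The span of the `m`-terms of `Z_d^0`. -/
def Zterms (m : ℕ) : Submodule ℝ (Xa d) :=
  Submodule.span ℝ {x | ∃ s : Finset (Fin (d + 1)), s.card = m ∧ x = sprod d (zgen d) s}

/-- The even Clifford algebra `Cl_k^0` (for `k ≤ d`), viewed inside `X_d`. -/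
def ClE (k : ℕ) : Submodule ℝ (Xa d) :=
  Submodule.span ℝ {x | ∃ s : Finset (Fin (d + 1)),
    (∀ j ∈ s, (j : ℕ) < k) ∧ Even s.card ∧ x = sprod d (e d) s}

/-- `Spun(d)`. -/
def Spun : Set (Xa d) :=
  {z | z ∈ Z0 d ∧ Nm d z = 1 ∧
    ∀ v : Fin d → ℝ, ∃ w : Fin d → ℝ,
      z * (eps d * iMap d v + eL d) * conj d z = eps d * iMap d w + eL d}

/-- `Spin(k)` (for `k ≤ d`), viewed inside `X_d`. -/
def Spin (k : ℕ) : Set (Xa d) :=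
  {x | x ∈ ClE d k ∧ Nm d x = 1 ∧
    ∀ v : Fin k → ℝ, ∃ w : Fin k → ℝ, x * iK d k v * conj d x = iK d k w}

/-- `T_{ap}`: the elements of `Spun(d)` whose action takes `a` to `p`. -/
def T (a p : Fin d → ℝ) : Set (Xa d) :=
  {x | x ∈ Spun d ∧ x * (eps d * iMap d a + eL d) * conj d x = eps d * iMap d p + eL d}

/-- `F_{ap} = (1 + ½e_{d+1}e_{d+2}i(p))·Cl_d^0·(1 − ½e_{d+1}e_{d+2}i(a))`. -/
def F (a p : Fin d → ℝ) : Set (Xa d) :=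
  (fun y => (1 + (2 : ℝ)⁻¹ • (eL d * eps d * iMap d p)) * y *
      (1 - (2 : ℝ)⁻¹ • (eL d * eps d * iMap d a))) '' (ClE d d : Set (Xa d))

/-- The coefficient of `1` of an element of `X_d`. -/
def c1 (x : Xa d) : ℝ := coeff1C (d + 1) (TrivSqZeroExt.fst x)

/-- The index set for the 2-term coordinates of `Z_d^0`; it has `d(d+1)/2` elements.
A pair `(j,k)` with `k < last` indexes the 2-term `e_{j+1}e_{k+1}`, while a pair
`(j, last)` indexes the 2-term `e_{j+1}e_{d+1}e_{d+2}`. -/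
abbrev Idx := {p : Fin (d + 1) × Fin (d + 1) // p.1 < p.2}

/-- The coefficient of the 2-term indexed by `p`. -/
def c2 (p : Idx d) (x : Xa d) : ℝ :=
  if (p.1.2 : ℕ) < d
  then coeff1C (d + 1) (gC (d + 1) p.1.2 * gC (d + 1) p.1.1 * TrivSqZeroExt.fst x)
  else coeff1C (d + 1) (gC (d + 1) p.1.2 * gC (d + 1) p.1.1 * TrivSqZeroExt.snd x)

/-- The hyperplane `H_0 = {x₁ = 0}` (coefficient of `1` vanishes). -/
def H0 : Set (Xa d) := {x | c1 d x = 0}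

/-- The map `η_d = π' ∘ π`: scale so that the coefficient of `1` is `1`, then keep only
the 2-term coordinates. -/
def eta (x : Xa d) : Idx d → ℝ := fun p => (c1 d x)⁻¹ * c2 d p x

/-- `Spun(d)_+`: elements of `Spun(d)` with positive coefficient of `1`. -/
def SpunP : Set (Xa d) := {x | x ∈ Spun d ∧ 0 < c1 d x}

/-- `L_{ap} = η_d(T_{ap} \ H_0)`. -/
def L (a p : Fin d → ℝ) : Set (Idx d → ℝ) := eta d '' (T d a p \ H0 d)

end X

/-!
In `X_d = Cl_{d+1}[ε]` (with `ε = e_{d+2}`) put `G = e_{d+1}`. The elements of `Z_d^0` are exactly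
`x + ε G y` with `x` even and `y` odd in `e_1, …, e_d`; as `G` commutes with `x` and anticommutes
with `y`, such an element has norm `x x̄ + ε G (x ȳ + y x̄)` and sends `ε i(v) + G` to
`G x x̄ + ε (x i(v) x̄ + y x̄ - x ȳ)`. With `c = y x̄`, whose conjugate is `x ȳ`, membership in
`T_{ap}` therefore says: `x x̄ = 1`, `c̄ = -c`, `x i(v) x̄ + 2c` is a vector for all `v`, and it
equals `i(p)` for `v = a`. Taking `v = 0` shows that `2c` is a vector, so `x ∈ Spin(d)`, and then
`2c = i(p) - x i(a) x̄` gives `y = ½ (i(p) x - x i(a))`, using `x̄ x = 1` (`Cl_{d+1}` is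
finite-dimensional). Conversely, for this `y` one finds `c = ½ i(p - w)` where `x i(a) x̄ = i(w)`.
-/

open TrivSqZeroExt

theorem Finset.sort_eq_sort_erase_append {α : Type*} [LinearOrder α] {s : Finset α} {m : α}
    (hm : m ∈ s) (hmax : ∀ a ∈ s, a ≤ m) :
    s.sort (· ≤ ·) = (s.erase m).sort (· ≤ ·) ++ [m] := by
  have hs : s = ((s.erase m).sort (· ≤ ·) ++ [m]).toFinset := by
    simp [Finset.insert_erase hm]
  conv_lhs => rw [hs]
  refine (List.toFinset_sort _ ?_).2 ?_
  · simp +contextual [List.nodup_append, Finset.sort_nodup]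
  · simpa [List.pairwise_append, Finset.pairwise_sort] using fun a _ ha => hmax a ha

section Generators

variable {n : ℕ}

theorem gC_mul_self (j : Fin n) : gC n j * gC n j = -1 := by
  have hQ : Qn n (Pi.single j 1) = -1 := by
    simp [Qn, QuadraticMap.weightedSumSquares_apply, Pi.single_apply]
  rw [gC, ι_sq_scalar, hQ, map_neg, map_one]

theorem gC_mul_gC_of_ne {j k : Fin n} (h : j ≠ k) : gC n j * gC n k = -(gC n k * gC n j) := by
  refine ι_mul_ι_comm_of_isOrtho ?_
  show Qn n _ = Qn n _ + Qn n _
  simp [Qn, QuadraticMap.weightedSumSquares_apply, Pi.single_apply, Finset.sum_add_distrib,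
    mul_add, h, h.symm]

theorem ι_eq_sum_smul_gC (v : Fin n → ℝ) : ι (Qn n) v = ∑ j, v j • gC n j := by
  conv_lhs => rw [pi_eq_sum_univ' v]
  simp only [map_sum, map_smul, gC]

theorem conjC_mul (x y : Cl n) : conjC n (x * y) = conjC n y * conjC n x := by
  simp [conjC]

theorem conjC_conjC (x : Cl n) : conjC n (conjC n x) = x := by
  simp [conjC, reverse_involute_commute.eq]

theorem conjC_smul (r : ℝ) (x : Cl n) : conjC n (r • x) = r • conjC n x := by
  simp [conjC]

theorem conjC_ι (v : Fin n → ℝ) : conjC n (ι (Qn n) v) = -ι (Qn n) v := by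
  simp [conjC]

theorem conjC_gC (j : Fin n) : conjC n (gC n j) = -gC n j := conjC_ι _

def prodGC (n : ℕ) (l : List (Fin n)) : Cl n := (l.map (gC n)).prod

@[simp] theorem prodGC_nil : prodGC n [] = 1 := rfl

@[simp] theorem prodGC_cons (j : Fin n) (l : List (Fin n)) :
    prodGC n (j :: l) = gC n j * prodGC n l := by
  simp [prodGC]

theorem sprodC_eq_prodGC (s : Finset (Fin n)) : sprodC n s = prodGC n (s.sort (· ≤ ·)) := rfl

theorem gC_mul_prodGC_of_notMem {j : Fin n} {l : List (Fin n)} (h : j ∉ l) :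
    gC n j * prodGC n l = (-1 : ℝ) ^ l.length • (prodGC n l * gC n j) := by
  induction l with
  | nil => simp
  | cons k t ih =>
    rw [List.mem_cons, not_or] at h
    rw [prodGC_cons, ← mul_assoc, gC_mul_gC_of_ne h.1, neg_mul, mul_assoc, ih h.2,
      mul_smul_comm, ← mul_assoc, List.length_cons, pow_succ, mul_neg_one, neg_smul]

theorem gC_mul_prodGC_of_sorted (j : Fin n) {l : List (Fin n)} (hl : l.Pairwise (· < ·)) :
    ∃ (r : ℝ) (m : List (Fin n)), m.Pairwise (· < ·) ∧ (∀ i ∈ m, i = j ∨ i ∈ l) ∧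
      (m.length : ZMod 2) = l.length + 1 ∧ gC n j * prodGC n l = r • prodGC n m := by
  induction l with
  | nil => exact ⟨1, [j], by simp⟩
  | cons k t ih =>
    obtain ⟨hkt, ht⟩ := List.pairwise_cons.1 hl
    rcases lt_trichotomy j k with hjk | rfl | hkj
    · refine ⟨1, j :: k :: t, ?_, by simp, by simp, by simp⟩
      exact List.pairwise_cons.2 ⟨fun i hi => (List.mem_cons.1 hi).elim (· ▸ hjk)
        (hjk.trans <| hkt i ·), hl⟩
    · refine ⟨-1, t, ht, by simp +contextual, ?_, ?_⟩
      · simp only [List.length_cons]; grind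
      · rw [prodGC_cons, ← mul_assoc, gC_mul_self, neg_one_mul, neg_one_smul]
    · obtain ⟨r, m, hm, hmem, hlen, hprod⟩ := ih ht
      refine ⟨-r, k :: m, List.pairwise_cons.2 ⟨fun i hi => ?_, hm⟩, fun i hi => ?_, ?_, ?_⟩
      · rcases hmem i hi with rfl | hi
        exacts [hkj, hkt i hi]
      · rcases List.mem_cons.1 hi with rfl | hi
        · simp
        · rcases hmem i hi with h | h <;> simp [h]
      · simp only [List.length_cons]; grind
      · rw [prodGC_cons, ← mul_assoc, gC_mul_gC_of_ne hkj.ne', neg_mul, mul_assoc, hprod,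
          prodGC_cons, mul_smul_comm, neg_smul]

theorem gC_mul_sprodC (j : Fin n) (s : Finset (Fin n)) :
    ∃ (r : ℝ) (t : Finset (Fin n)), t ⊆ insert j s ∧ (t.card : ZMod 2) = s.card + 1 ∧
      gC n j * sprodC n s = r • sprodC n t := by
  obtain ⟨r, m, hm, hmem, hlen, hprod⟩ :=
    gC_mul_prodGC_of_sorted j (s.sortedLT_sort.pairwise)
  refine ⟨r, m.toFinset, fun i hi => ?_, ?_, ?_⟩
  · simpa using hmem i (List.mem_toFinset.1 hi)
  · rwa [List.toFinset_card_of_nodup hm.nodup, ← Finset.length_sort (· ≤ ·)]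
  · rw [sprodC_eq_prodGC, hprod, sprodC_eq_prodGC,
      (List.toFinset_sort _ hm.nodup).2 (hm.imp le_of_lt)]

end Generators

section Parity

variable {n k : ℕ}

def evenOddBelow (n k : ℕ) (i : ZMod 2) : Submodule ℝ (Cl n) :=
  Submodule.span ℝ
    {x | ∃ s : Finset (Fin n), (∀ j ∈ s, (j : ℕ) < k) ∧ (s.card : ZMod 2) = i ∧ x = sprodC n s}

theorem sprodC_mem_evenOddBelow {s : Finset (Fin n)} (hs : ∀ j ∈ s, (j : ℕ) < k) {i : ZMod 2}
    (hi : (s.card : ZMod 2) = i) : sprodC n s ∈ evenOddBelow n k i :=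
  Submodule.subset_span ⟨s, hs, hi, rfl⟩

theorem one_mem_evenOddBelow : (1 : Cl n) ∈ evenOddBelow n k 0 := by
  simpa [sprodC] using sprodC_mem_evenOddBelow (n := n) (k := k) (s := ∅) (by simp) (by simp)

theorem gC_mul_mem_evenOddBelow {j : Fin n} (hj : (j : ℕ) < k) {i : ZMod 2} {x : Cl n}
    (hx : x ∈ evenOddBelow n k i) : gC n j * x ∈ evenOddBelow n k (i + 1) := by
  induction hx using Submodule.span_induction with
  | mem x hx =>
    obtain ⟨s, hs, rfl, rfl⟩ := hx
    obtain ⟨r, t, hts, hcard, hprod⟩ := gC_mul_sprodC j s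
    rw [hprod]
    refine Submodule.smul_mem _ r (sprodC_mem_evenOddBelow (fun i hi => ?_) hcard)
    rcases Finset.mem_insert.1 (hts hi) with rfl | hi
    exacts [hj, hs i hi]
  | zero => simp
  | add x y _ _ hx hy => simpa [mul_add] using add_mem hx hy
  | smul r x _ hx => simpa using Submodule.smul_mem _ r hx

theorem ι_mul_mem_evenOddBelow {v : Fin n → ℝ} (hv : ∀ j : Fin n, k ≤ j → v j = 0) {i : ZMod 2}
    {x : Cl n} (hx : x ∈ evenOddBelow n k i) : ι (Qn n) v * x ∈ evenOddBelow n k (i + 1) := by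
  rw [ι_eq_sum_smul_gC, Finset.sum_mul]
  refine Submodule.sum_mem _ fun j _ => ?_
  by_cases hj : (j : ℕ) < k
  · simpa using Submodule.smul_mem _ (v j) (gC_mul_mem_evenOddBelow hj hx)
  · simp [hv j (not_lt.1 hj)]

theorem ι_mem_evenOddBelow {v : Fin n → ℝ} (hv : ∀ j : Fin n, k ≤ j → v j = 0) :
    ι (Qn n) v ∈ evenOddBelow n k 1 := by
  simpa using ι_mul_mem_evenOddBelow hv one_mem_evenOddBelow

theorem prodGC_mul_mem_evenOddBelow {l : List (Fin n)} (hl : ∀ j ∈ l, (j : ℕ) < k) {i : ZMod 2}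
    {x : Cl n} (hx : x ∈ evenOddBelow n k i) :
    prodGC n l * x ∈ evenOddBelow n k (l.length + i) := by
  induction l with
  | nil => simpa using hx
  | cons j t ih =>
    have := gC_mul_mem_evenOddBelow (hl j (by simp))
      (ih fun i hi => hl i (List.mem_cons_of_mem _ hi))
    rw [prodGC_cons, mul_assoc]
    convert this using 2
    simp only [List.length_cons]; grind

theorem mul_mem_evenOddBelow {i i' : ZMod 2} {x y : Cl n} (hx : x ∈ evenOddBelow n k i)
    (hy : y ∈ evenOddBelow n k i') : x * y ∈ evenOddBelow n k (i + i') := by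
  induction hx using Submodule.span_induction with
  | mem x hx =>
    obtain ⟨s, hs, rfl, rfl⟩ := hx
    have := prodGC_mul_mem_evenOddBelow (l := s.sort (· ≤ ·))
      (fun j hj => hs j (by simpa using hj)) hy
    rwa [Finset.length_sort] at this
  | zero => simp
  | add x z _ _ hx hz => simpa [add_mul] using add_mem hx hz
  | smul r x _ hx => simpa using Submodule.smul_mem _ r hx

theorem gC_mem_evenOddBelow {j : Fin n} (hj : (j : ℕ) < k) : gC n j ∈ evenOddBelow n k 1 := by
  simpa using gC_mul_mem_evenOddBelow hj one_mem_evenOddBelow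

theorem conjC_prodGC_mem_evenOddBelow {l : List (Fin n)} (hl : ∀ j ∈ l, (j : ℕ) < k) :
    conjC n (prodGC n l) ∈ evenOddBelow n k l.length := by
  induction l with
  | nil => simpa [conjC] using one_mem_evenOddBelow
  | cons j t ih =>
    have := mul_mem_evenOddBelow (ih fun i hi => hl i (by simp [hi]))
      (Submodule.neg_mem _ (gC_mem_evenOddBelow (hl j (by simp))))
    rw [prodGC_cons, conjC_mul, conjC_gC, List.length_cons, Nat.cast_succ]
    exact this

theorem conjC_mem_evenOddBelow {i : ZMod 2} {x : Cl n} (hx : x ∈ evenOddBelow n k i) :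
    conjC n x ∈ evenOddBelow n k i := by
  induction hx using Submodule.span_induction with
  | mem x hx =>
    obtain ⟨s, hs, rfl, rfl⟩ := hx
    have := conjC_prodGC_mem_evenOddBelow (l := s.sort (· ≤ ·))
      fun j hj => hs j (by simpa using hj)
    rwa [Finset.length_sort] at this
  | zero => simp [conjC]
  | add x z _ _ hx hz => simpa [conjC] using add_mem hx hz
  | smul r x _ hx => simpa [conjC] using Submodule.smul_mem _ r hx

theorem gC_mul_eq_of_mem_evenOddBelow {j : Fin n} (hj : k ≤ (j : ℕ)) {i : ZMod 2} {x : Cl n}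
    (hx : x ∈ evenOddBelow n k i) : gC n j * x = (-1 : ℝ) ^ i.val • (x * gC n j) := by
  induction hx using Submodule.span_induction with
  | mem x hx =>
    obtain ⟨s, hs, rfl, rfl⟩ := hx
    have hj : j ∉ s.sort (· ≤ ·) := fun h => (hs j (by simpa using h)).not_ge hj
    rw [sprodC_eq_prodGC, gC_mul_prodGC_of_notMem hj, ZMod.val_natCast,
      ← neg_one_pow_eq_pow_mod_two, Finset.length_sort]
  | zero => simp
  | add x z _ _ hx hz => simp [mul_add, add_mul, hx, hz]
  | smul r x _ hx => rw [mul_smul_comm, hx, smul_mul_assoc, smul_comm]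

end Parity

section Finiteness

variable {n : ℕ}

theorem span_range_sprodC : Submodule.span ℝ (Set.range (sprodC n)) = ⊤ := by
  rw [eq_top_iff]
  rintro x -
  induction x using CliffordAlgebra.left_induction with
  | algebraMap r =>
    rw [Algebra.algebraMap_eq_smul_one]
    exact Submodule.smul_mem _ r (Submodule.subset_span ⟨∅, by simp [sprodC]⟩)
  | add x y hx hy => exact add_mem hx hy
  | ι_mul x v hx =>
    rw [ι_eq_sum_smul_gC, Finset.sum_mul]
    refine Submodule.sum_mem _ fun j _ => ?_
    rw [smul_mul_assoc]
    refine Submodule.smul_mem _ _ ?_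
    induction hx using Submodule.span_induction with
    | mem x hx =>
      obtain ⟨s, rfl⟩ := hx
      obtain ⟨r, t, -, -, hprod⟩ := gC_mul_sprodC j s
      exact hprod ▸ Submodule.smul_mem _ r (Submodule.subset_span ⟨t, rfl⟩)
    | zero => simp
    | add x y _ _ hx hy => simpa [mul_add] using add_mem hx hy
    | smul r x _ hx => simpa using Submodule.smul_mem _ r hx

instance : Module.Finite ℝ (Cl n) :=
  ⟨Submodule.fg_def.2 ⟨_, Set.finite_range _, span_range_sprodC⟩⟩

/-- Makes `Cl n` Dedekind-finite, i.e. provides `mul_eq_one_comm`. -/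
instance : IsArtinianRing (Cl n) := IsArtinianRing.of_finite ℝ _

end Finiteness

section Rotors

variable {d : ℕ}

def extendByZero (d : ℕ) : (Fin d → ℝ) →ₗ[ℝ] (Fin (d + 1) → ℝ) where
  toFun v j := if h : (j : ℕ) < d then v ⟨j, h⟩ else 0
  map_add' u v := by ext j; by_cases h : (j : ℕ) < d <;> simp [h]
  map_smul' r v := by ext j; by_cases h : (j : ℕ) < d <;> simp [h]

def vecC (d : ℕ) : (Fin d → ℝ) →ₗ[ℝ] Cl (d + 1) := (ι (Qn (d + 1))).comp (extendByZero d)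

theorem vecC_mem_evenOddBelow (v : Fin d → ℝ) : vecC d v ∈ evenOddBelow (d + 1) d 1 :=
  ι_mem_evenOddBelow fun _ hj => dif_neg (not_lt.2 hj)

theorem conjC_vecC (v : Fin d → ℝ) : conjC (d + 1) (vecC d v) = -vecC d v := conjC_ι _

def IsRotor (d : ℕ) (x : Cl (d + 1)) : Prop :=
  x * conjC (d + 1) x = 1 ∧ ∀ v, ∃ w, x * vecC d v * conjC (d + 1) x = vecC d w

theorem sandwich_conditions_iff {x y : Cl (d + 1)} (a p : Fin d → ℝ) :
    (x * conjC (d + 1) x = 1 ∧ x * conjC (d + 1) y + y * conjC (d + 1) x = 0 ∧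
      (∀ v, ∃ w, x * vecC d v * conjC (d + 1) x + (y * conjC (d + 1) x - x * conjC (d + 1) y)
        = vecC d w) ∧
      x * vecC d a * conjC (d + 1) x + (y * conjC (d + 1) x - x * conjC (d + 1) y) = vecC d p) ↔
    IsRotor d x ∧ y = (2 : ℝ)⁻¹ • (vecC d p * x - x * vecC d a) := by
  constructor
  · rintro ⟨hx, hn, hv, ha⟩
    have hcc : x * conjC (d + 1) y = -(y * conjC (d + 1) x) := eq_neg_of_add_eq_zero_left hn
    rw [hcc, sub_neg_eq_add] at hv ha
    obtain ⟨w₀, hw₀⟩ := hv 0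
    rw [map_zero, mul_zero, zero_mul, zero_add] at hw₀
    refine ⟨⟨hx, fun v => ?_⟩, ?_⟩
    · obtain ⟨w, hw⟩ := hv v
      exact ⟨w - w₀, by rw [map_sub, ← hw, ← hw₀, add_sub_cancel_right]⟩
    · have h2 : (2 : ℝ) • (y * conjC (d + 1) x) = vecC d p - x * vecC d a * conjC (d + 1) x := by
        rw [two_smul, ← ha, add_sub_cancel_left]
      calc y = (2 : ℝ)⁻¹ • ((2 : ℝ) • (y * conjC (d + 1) x) * x) := by
            rw [smul_mul_assoc, smul_smul, mul_assoc, mul_eq_one_comm.1 hx]; norm_num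
        _ = _ := by rw [h2, sub_mul, mul_assoc _ (conjC (d + 1) x), mul_eq_one_comm.1 hx, mul_one]
  · rintro ⟨⟨hx, hrot⟩, rfl⟩
    obtain ⟨wa, hwa⟩ := hrot a
    set y := (2 : ℝ)⁻¹ • (vecC d p * x - x * vecC d a)
    have hyx : y * conjC (d + 1) x = (2 : ℝ)⁻¹ • vecC d (p - wa) := by
      rw [smul_mul_assoc, sub_mul, mul_assoc, hx, mul_one, hwa, map_sub]
    have hxy : x * conjC (d + 1) y = -((2 : ℝ)⁻¹ • vecC d (p - wa)) := by
      rw [← conjC_conjC (x * _), conjC_mul, conjC_conjC, hyx, conjC_smul, conjC_vecC, smul_neg]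
    have hdiff : y * conjC (d + 1) x - x * conjC (d + 1) y = vecC d (p - wa) := by
      rw [hyx, hxy, sub_neg_eq_add, ← add_smul]; norm_num
    refine ⟨hx, by rw [hxy, hyx, neg_add_cancel], fun v => ?_, ?_⟩
    · obtain ⟨w, hw⟩ := hrot v
      exact ⟨w + (p - wa), by rw [hw, hdiff, map_add]⟩
    · rw [hwa, hdiff, ← map_add, add_sub_cancel]

end Rotors

section LastGenerator

variable {d : ℕ}

def gLast (d : ℕ) : Cl (d + 1) := gC (d + 1) (Fin.last d)

theorem gLast_mul_self : gLast d * gLast d = -1 := gC_mul_self _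

theorem isUnit_gLast : IsUnit (gLast d) :=
  .of_mul_eq_one (-gLast d) (by rw [mul_neg, gLast_mul_self, neg_neg])

theorem conjC_gLast : conjC (d + 1) (gLast d) = -gLast d := conjC_gC _

theorem gLast_commute {x : Cl (d + 1)} (hx : x ∈ evenOddBelow (d + 1) d 0) :
    Commute (gLast d) x := by
  simpa [Commute, SemiconjBy, gLast] using
    gC_mul_eq_of_mem_evenOddBelow (j := Fin.last d) (by simp) hx

theorem gLast_mul_of_mem_one {y : Cl (d + 1)} (hy : y ∈ evenOddBelow (d + 1) d 1) :
    gLast d * y = -(y * gLast d) := by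
  simpa [gLast, ZMod.val_one] using
    gC_mul_eq_of_mem_evenOddBelow (j := Fin.last d) (by simp) hy

theorem gLast_mul_mul_gLast {y : Cl (d + 1)} (hy : y ∈ evenOddBelow (d + 1) d 1) :
    gLast d * y * gLast d = y := by
  rw [gLast_mul_of_mem_one hy, neg_mul, mul_assoc, gLast_mul_self, mul_neg_one, neg_neg]

theorem conjC_gLast_mul {y : Cl (d + 1)} (hy : y ∈ evenOddBelow (d + 1) d 1) :
    conjC (d + 1) (gLast d * y) = gLast d * conjC (d + 1) y := by
  rw [conjC_mul, conjC_gLast, gLast_mul_of_mem_one (conjC_mem_evenOddBelow hy), mul_neg]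

end LastGenerator

theorem DualNumber.inl_add_inr_mul_inl_add_inr {A : Type*} [Ring A] (a b c e : A) :
    (inl a + inr b : DualNumber A) * (inl c + inr e) = inl (a * c) + inr (a * e + b * c) := by
  ext <;> simp

namespace X

variable {d : ℕ}

theorem iK_eq_inl (v : Fin d → ℝ) : X.iK d d v = inl (vecC d v) := rfl

theorem iMap_eq_inl (v : Fin d → ℝ) : X.iMap d v = inl (vecC d v) := rfl

theorem conj_inl_add_inr (a b : Cl (d + 1)) :
    X.conj d (inl a + inr b) = inl (conjC (d + 1) a) + inr (conjC (d + 1) b) := by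
  simp [X.conj]

theorem conj_inl (x : Cl (d + 1)) : X.conj d (inl x) = inl (conjC (d + 1) x) := by
  simp [X.conj, conjC]

theorem eps_mul_iMap_add_eL (v : Fin d → ℝ) :
    X.eps d * X.iMap d v + X.eL d = inl (gLast d) + inr (vecC d v) := by
  rw [iMap_eq_inl]
  ext <;> simp [X.eps, X.eL, X.e, gLast]

theorem eL_mul_eps : X.eL d * X.eps d = inr (gLast d) := by
  ext <;> simp [X.eps, X.eL, X.e, gLast]

theorem Nm_inl_add_inr {x y : Cl (d + 1)} (hx : x ∈ evenOddBelow (d + 1) d 0)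
    (hy : y ∈ evenOddBelow (d + 1) d 1) :
    X.Nm d (inl x + inr (gLast d * y)) = inl (x * conjC (d + 1) x) +
      inr (gLast d * (x * conjC (d + 1) y + y * conjC (d + 1) x)) := by
  rw [X.Nm, conj_inl_add_inr, DualNumber.inl_add_inr_mul_inl_add_inr, conjC_gLast_mul hy,
    ← mul_assoc, ← (gLast_commute hx).eq]
  simp only [mul_add, mul_assoc]

theorem inl_add_inr_sandwich {x y : Cl (d + 1)} (hx : x ∈ evenOddBelow (d + 1) d 0)
    (hy : y ∈ evenOddBelow (d + 1) d 1) (u : Cl (d + 1)) :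
    (inl x + inr (gLast d * y)) * (inl (gLast d) + inr u) * X.conj d (inl x + inr (gLast d * y)) =
      inl (gLast d * (x * conjC (d + 1) x)) +
        inr (x * u * conjC (d + 1) x + (y * conjC (d + 1) x - x * conjC (d + 1) y)) := by
  rw [conj_inl_add_inr, DualNumber.inl_add_inr_mul_inl_add_inr,
    DualNumber.inl_add_inr_mul_inl_add_inr, gLast_mul_mul_gLast hy, conjC_gLast_mul hy]
  congr 2
  · rw [← (gLast_commute hx).eq, mul_assoc]
  · rw [mul_assoc x, ← mul_assoc (gLast d), gLast_mul_self]
    noncomm_ring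


theorem sprod_e (s : Finset (Fin (d + 1))) : X.sprod d (X.e d) s = inl (sprodC (d + 1) s) := by
  rw [X.sprod, sprodC, ← inlAlgHom_apply ℝ, map_list_prod, List.map_map]
  rfl

theorem sprod_zgen_of_last_notMem {s : Finset (Fin (d + 1))} (h : Fin.last d ∉ s) :
    X.sprod d (X.zgen d) s = inl (sprodC (d + 1) s) := by
  rw [← sprod_e, X.sprod, X.sprod]
  congr 1
  refine List.map_congr_left fun j hj => if_pos (Fin.val_lt_last ?_)
  rintro rfl
  exact h (by simpa using hj)

theorem sprod_zgen_of_last_mem {s : Finset (Fin (d + 1))} (h : Fin.last d ∈ s) :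
    X.sprod d (X.zgen d) s = inr (sprodC (d + 1) (s.erase (Fin.last d)) * gLast d) := by
  have hz : X.zgen d (Fin.last d) = inr (gLast d) := by
    rw [X.zgen, if_neg (by simp), eL_mul_eps]
  rw [X.sprod, Finset.sort_eq_sort_erase_append h fun a _ => Fin.le_last a, List.map_append,
    List.prod_append, ← X.sprod, sprod_zgen_of_last_notMem (by simp), List.map_singleton,
    List.prod_singleton, hz, inl_mul_inr, smul_eq_mul]

theorem inl_mem_Z0 {x : Cl (d + 1)} (hx : x ∈ evenOddBelow (d + 1) d 0) :
    (inl x : Xa d) ∈ X.Z0 d := by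
  refine (Submodule.span_le (p := (X.Z0 d).comap (inlAlgHom ℝ _ (Cl (d + 1))).toLinearMap)).2
    ?_ hx
  rintro _ ⟨s, hs, hcard, rfl⟩
  refine Submodule.subset_span ⟨s, ZMod.natCast_eq_zero_iff_even.1 hcard, ?_⟩
  exact (sprod_zgen_of_last_notMem fun h => (hs _ h).ne rfl).symm

theorem inr_gLast_mul_mem_Z0 {y : Cl (d + 1)} (hy : y ∈ evenOddBelow (d + 1) d 1) :
    (inr (gLast d * y) : Xa d) ∈ X.Z0 d := by
  refine (Submodule.span_le (p := (X.Z0 d).comap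
    (((inrHom (Cl (d + 1)) (Cl (d + 1))).restrictScalars ℝ) ∘ₗ
      LinearMap.mulLeft ℝ (gLast d)))).2 ?_ hy
  rintro _ ⟨s, hs, hcard, rfl⟩
  have hlast : Fin.last d ∉ s := fun h => (hs _ h).ne rfl
  have hmem : sprodC (d + 1) s ∈ evenOddBelow (d + 1) d 1 := sprodC_mem_evenOddBelow hs hcard
  have hsprod := sprod_zgen_of_last_mem (Finset.mem_insert_self (Fin.last d) s)
  rw [Finset.erase_insert hlast, ← neg_neg (sprodC _ s * _), ← gLast_mul_of_mem_one hmem,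
    inr_neg] at hsprod
  suffices X.sprod d (X.zgen d) (insert (Fin.last d) s) ∈ X.Z0 d by
    simpa [hsprod] using neg_mem this
  refine Submodule.subset_span ⟨_, ?_, rfl⟩
  rw [← ZMod.natCast_eq_zero_iff_even, Finset.card_insert_of_notMem hlast]
  push_cast; grind

theorem exists_eq_inl_add_inr_of_mem_Z0 {z : Xa d} (hz : z ∈ X.Z0 d) :
    ∃ x ∈ evenOddBelow (d + 1) d 0, ∃ y ∈ evenOddBelow (d + 1) d 1,
      z = inl x + inr (gLast d * y) := by
  induction hz using Submodule.span_induction with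
  | mem z hz =>
    obtain ⟨s, hs, rfl⟩ := hz
    by_cases h : Fin.last d ∈ s
    · have hcard : ((s.erase (Fin.last d)).card : ZMod 2) = 1 := by
        have := congrArg (Nat.cast : ℕ → ZMod 2) (Finset.card_erase_add_one h)
        push_cast at this
        rw [ZMod.natCast_eq_zero_iff_even.2 hs] at this
        grind
      have hmem := sprodC_mem_evenOddBelow
        (fun j hj => Fin.val_lt_last (Finset.ne_of_mem_erase hj)) hcard
      refine ⟨0, zero_mem _, -sprodC (d + 1) (s.erase (Fin.last d)), neg_mem hmem, ?_⟩
      rw [sprod_zgen_of_last_mem h, mul_neg, gLast_mul_of_mem_one hmem, neg_neg, inl_zero,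
        zero_add]
    · refine ⟨sprodC (d + 1) s, sprodC_mem_evenOddBelow (fun j hj => Fin.val_lt_last ?_)
        (ZMod.natCast_eq_zero_iff_even.2 hs), 0, zero_mem _, ?_⟩
      · rintro rfl; exact h hj
      · rw [sprod_zgen_of_last_notMem h, mul_zero, inr_zero, add_zero]
  | zero => exact ⟨0, zero_mem _, 0, zero_mem _, by simp⟩
  | add z z' _ _ hz hz' =>
    obtain ⟨x, hx, y, hy, rfl⟩ := hz
    obtain ⟨x', hx', y', hy', rfl⟩ := hz'
    refine ⟨x + x', add_mem hx hx', y + y', add_mem hy hy', ?_⟩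
    rw [inl_add, mul_add, inr_add]
    abel
  | smul r z _ hz =>
    obtain ⟨x, hx, y, hy, rfl⟩ := hz
    refine ⟨r • x, Submodule.smul_mem _ r hx, r • y, Submodule.smul_mem _ r hy, ?_⟩
    rw [smul_add, mul_smul_comm, inl_smul, inr_smul]

theorem ClE_eq_map_inl :
    X.ClE d d = (evenOddBelow (d + 1) d 0).map (inlAlgHom ℝ _ (Cl (d + 1))).toLinearMap := by
  rw [evenOddBelow, Submodule.map_span, X.ClE]
  congr 1
  ext z
  simp [sprod_e, ZMod.natCast_eq_zero_iff_even, and_assoc, eq_comm]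

theorem mem_Spin_iff {z : Xa d} :
    z ∈ X.Spin d d ↔ ∃ x ∈ evenOddBelow (d + 1) d 0, z = inl x ∧ IsRotor d x := by
  simp only [X.Spin, Set.mem_ofPred_eq, ClE_eq_map_inl, Submodule.mem_map,
    AlgHom.toLinearMap_apply, inlAlgHom_apply]
  constructor
  · rintro ⟨⟨x, hx, rfl⟩, hN, hv⟩
    simp only [X.Nm, iK_eq_inl, conj_inl, inl_mul_inl, ← inl_one, inl_injective.eq_iff] at hN hv
    exact ⟨x, hx, rfl, hN, hv⟩
  · rintro ⟨x, hx, rfl, hN, hv⟩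
    simp only [X.Nm, iK_eq_inl, conj_inl, inl_mul_inl, hN, inl_one, inl_injective.eq_iff]
    exact ⟨⟨x, hx, rfl⟩, trivial, hv⟩

theorem inl_add_inr_mem_T_iff {x y : Cl (d + 1)} (hx : x ∈ evenOddBelow (d + 1) d 0)
    (hy : y ∈ evenOddBelow (d + 1) d 1) (a p : Fin d → ℝ) :
    inl x + inr (gLast d * y) ∈ X.T d a p ↔
      x * conjC (d + 1) x = 1 ∧ x * conjC (d + 1) y + y * conjC (d + 1) x = 0 ∧
      (∀ v, ∃ w, x * vecC d v * conjC (d + 1) x + (y * conjC (d + 1) x - x * conjC (d + 1) y)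
        = vecC d w) ∧
      x * vecC d a * conjC (d + 1) x + (y * conjC (d + 1) x - x * conjC (d + 1) y) = vecC d p := by
  simp only [X.T, X.Spun, Set.mem_ofPred_eq, eps_mul_iMap_add_eL, inl_add_inr_sandwich hx hy,
    Nm_inl_add_inr hx hy, add_mem (inl_mem_Z0 hx) (inr_gLast_mul_mem_Z0 hy), true_and,
    TrivSqZeroExt.ext_iff, fst_add, fst_inl, fst_inr, snd_add, snd_inl, snd_inr, fst_one, snd_one,
    add_zero, zero_add, isUnit_gLast.mul_right_eq_zero]
  constructor
  · rintro ⟨⟨⟨h1, hn⟩, hv⟩, ha⟩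
    exact ⟨h1, hn, fun v => (hv v).imp fun _ h => h.2, ha.2⟩
  · rintro ⟨h1, hn, hv, ha⟩
    have hG : gLast d * (x * conjC (d + 1) x) = gLast d := by rw [h1, mul_one]
    exact ⟨⟨⟨h1, hn⟩, fun v => (hv v).imp fun _ h => ⟨hG, h⟩⟩, hG, ha⟩

theorem inl_add_correction (x : Cl (d + 1)) (a p : Fin d → ℝ) :
    inl x + (2 : ℝ)⁻¹ • (X.eL d * X.eps d * (X.iMap d p * inl x - inl x * X.iMap d a)) =
      inl x + inr (gLast d * ((2 : ℝ)⁻¹ • (vecC d p * x - x * vecC d a))) := by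
  rw [eL_mul_eps, iMap_eq_inl, iMap_eq_inl]
  ext <;> simp

end X

/-- For any `a, p ∈ ℝ^d`,
`T_{ap} = {γ + ½·e_{d+1}e_{d+2}·(i(p)γ − γ·i(a)) : γ ∈ Spin(d)}`. -/
theorem T_eq_spin_description (d : ℕ) (a p : Fin d → ℝ) :
    X.T d a p = {x | ∃ γ ∈ X.Spin d d,
      x = γ + (2 : ℝ)⁻¹ • (X.eL d * X.eps d * (X.iMap d p * γ - γ * X.iMap d a))} := by
  ext z
  constructor
  · intro hz
    obtain ⟨x, hx, y, hy, rfl⟩ := X.exists_eq_inl_add_inr_of_mem_Z0 hz.1.1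
    obtain ⟨hrot, rfl⟩ := (sandwich_conditions_iff a p).1 ((X.inl_add_inr_mem_T_iff hx hy a p).1 hz)
    exact ⟨inl x, X.mem_Spin_iff.2 ⟨x, hx, rfl, hrot⟩, (X.inl_add_correction x a p).symm⟩
  · rintro ⟨γ, hγ, rfl⟩
    obtain ⟨x, hx, rfl, hrot⟩ := X.mem_Spin_iff.1 hγ
    have hy : (2 : ℝ)⁻¹ • (vecC d p * x - x * vecC d a) ∈ evenOddBelow (d + 1) d 1 := by
      refine Submodule.smul_mem _ _ (sub_mem ?_ ?_)
      · simpa using mul_mem_evenOddBelow (vecC_mem_evenOddBelow p) hx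
      · simpa using mul_mem_evenOddBelow hx (vecC_mem_evenOddBelow a)
    rw [X.inl_add_correction]
    exact (X.inl_add_inr_mem_T_iff hx hy a p).2 ((sandwich_conditions_iff a p).2 ⟨hrot, rfl⟩)
end
end

section
/- If g, g' ∈ G_d have the same nonzero coefficient of 1 and the same 2-terms (i.e., the same coefficient of e_je_k for every 1 ≤ j < k ≤ d), then g = g'. -/
noncomputable section

open CliffordAlgebra

/-!
Write `g = rγ` and `g' = r'γ'`. The coefficient of `1`, `φ`, is a normalized trace, so
`φ(xy) = φ(yx)`, and the hypotheses say that `φ(i(a) i(b) g) = φ(i(a) i(b) g')` for all vectors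
`a, b`. If `g i(v) = i(u) g`, the trace property turns this into `φ(i(v) i(z) g) = φ(i(z) i(u) g)`,
and since `φ(i(w) i(w) g) = -‖w‖² φ(g)` with `φ(g) ≠ 0`, the vector `u` is determined by these
coefficients. Hence `γ` and `γ'` induce the same rotation, so `γ̄γ'` is an even element commuting
with every generator, i.e. a real scalar `c`. Comparing coefficients of `1` then gives `r = r'c`.
-/

namespace Cl

variable {n : ℕ}

lemma Qn_apply (v : Fin n → ℝ) : Qn n v = -∑ i, v i * v i := by
  simp [Qn, QuadraticMap.weightedSumSquares_apply]

lemma gC_mul_self (j : Fin n) : gC n j * gC n j = -1 := by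
  rw [gC, ι_sq_scalar, Qn_apply]
  simp [Pi.single_apply]

lemma gC_mul_gC_of_ne {j k : Fin n} (h : j ≠ k) : gC n j * gC n k = -(gC n k * gC n j) := by
  have hpolar : QuadraticMap.polar (Qn n) (Pi.single j 1) (Pi.single k 1) = 0 := by
    simp [QuadraticMap.polar, Qn_apply, Pi.single_apply, mul_add, Finset.sum_add_distrib, h,
      h.symm]
  have := ι_mul_ι_add_swap (Q := Qn n) (Pi.single j 1) (Pi.single k 1)
  rwa [hpolar, map_zero, add_eq_zero_iff_eq_neg] at this

-- `coeff1Linear n x` is definitionally `coeff1C n x`.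
def coeff1Linear (n : ℕ) : Cl n →ₗ[ℝ] ℝ :=
  (2 ^ n : ℝ)⁻¹ • LinearMap.trace ℝ (Cl n) ∘ₗ LinearMap.mul ℝ (Cl n)

lemma coeff1C_mul_comm (x y : Cl n) : coeff1C n (x * y) = coeff1C n (y * x) := by
  rw [coeff1C, coeff1C, LinearMap.mulLeft_mul, LinearMap.mulLeft_mul,
    ← Module.End.mul_eq_comp, ← Module.End.mul_eq_comp, LinearMap.trace_mul_comm]

lemma coeff1C_smul (c : ℝ) (x : Cl n) : coeff1C n (c • x) = c * coeff1C n x :=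
  map_smul (coeff1Linear n) c x

lemma coeff1C_neg (x : Cl n) : coeff1C n (-x) = -coeff1C n x :=
  map_neg (coeff1Linear n) x

lemma coeff1C_sub (x y : Cl n) : coeff1C n (x - y) = coeff1C n x - coeff1C n y :=
  map_sub (coeff1Linear n) x y

lemma iC_eq_sum (v : Fin n → ℝ) : iC n v = ∑ j, v j • gC n j := by
  conv_lhs => rw [iC, ← Finset.univ_sum_single v, map_sum]
  congr! with j
  rw [gC, ← map_smul, ← Pi.single_smul', smul_eq_mul, mul_one]

def listProd (l : List (Fin n)) : Cl n := (l.map (gC n)).prod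

lemma sprodC_eq_listProd (s : Finset (Fin n)) : sprodC n s = listProd (s.sort (· ≤ ·)) := rfl

lemma listProd_cons (j : Fin n) (l : List (Fin n)) : listProd (j :: l) = gC n j * listProd l := by
  simp [listProd]

lemma gC_mul_listProd (j : Fin n) {l : List (Fin n)} (hl : l.Pairwise (· < ·)) :
    ∃ (c : ℝ) (l' : List (Fin n)), l'.Pairwise (· < ·) ∧ l' ⊆ j :: l ∧
      gC n j * listProd l = c • listProd l' := by
  induction l with
  | nil => exact ⟨1, [j], List.pairwise_singleton _ j, by simp, by simp [listProd]⟩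
  | cons k t ih =>
    obtain ⟨hkt, ht⟩ := List.pairwise_cons.mp hl
    rcases lt_trichotomy j k with hjk | rfl | hkj
    · refine ⟨1, j :: k :: t, List.pairwise_cons.mpr ⟨?_, hl⟩, by simp, by simp [listProd_cons]⟩
      simpa [hjk] using fun x hx => hjk.trans (hkt x hx)
    · refine ⟨-1, t, ht, by simp, ?_⟩
      rw [listProd_cons, ← mul_assoc, gC_mul_self, neg_one_smul, neg_one_mul]
    · obtain ⟨c, l', hl', hsub, heq⟩ := ih ht
      refine ⟨-c, k :: l', List.pairwise_cons.mpr ⟨fun x hx => ?_, hl'⟩, ?_, ?_⟩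
      · rcases List.mem_cons.mp (hsub hx) with rfl | hx
        exacts [hkj, hkt x hx]
      · exact List.cons_subset.mpr
          ⟨by simp, List.Subset.trans hsub (List.cons_subset_cons j (by simp))⟩
      · rw [listProd_cons, listProd_cons, ← mul_assoc, gC_mul_gC_of_ne hkj.ne', neg_mul, mul_assoc,
          heq, mul_smul_comm, neg_smul]

lemma listProd_mem_range_sprodC {l : List (Fin n)} (hl : l.Pairwise (· < ·)) :
    listProd l ∈ Set.range (sprodC n) :=
  ⟨l.toFinset, by
    rw [sprodC_eq_listProd, (List.toFinset_sort (· ≤ ·) hl.nodup).mpr (hl.imp le_of_lt)]⟩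

lemma span_range_sprodC : Submodule.span ℝ (Set.range (sprodC n)) = ⊤ := by
  set W := Submodule.span ℝ (Set.range (sprodC n))
  have hgen (j : Fin n) : W ≤ W.comap (LinearMap.mulLeft ℝ (gC n j)) := by
    refine Submodule.span_le.mpr ?_
    rintro - ⟨s, rfl⟩
    obtain ⟨c, l', hl', -, heq⟩ :=
      gC_mul_listProd j (List.sortedLT_iff_pairwise.mp (Finset.sortedLT_sort s))
    change gC n j * listProd _ ∈ W
    exact heq ▸ W.smul_mem c (Submodule.subset_span (listProd_mem_range_sprodC hl'))
  have hmul (x : Cl n) : ∀ w ∈ W, x * w ∈ W := by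
    induction x using CliffordAlgebra.induction with
    | algebraMap r => exact fun w hw => by rw [← Algebra.smul_def]; exact W.smul_mem r hw
    | ι v =>
      intro w hw
      rw [← iC, iC_eq_sum, Finset.sum_mul]
      exact W.sum_mem fun j _ => by rw [smul_mul_assoc]; exact W.smul_mem _ (hgen j hw)
    | mul a b ha hb => exact fun w hw => by rw [mul_assoc]; exact ha _ (hb w hw)
    | add a b ha hb => exact fun w hw => by rw [add_mul]; exact W.add_mem (ha w hw) (hb w hw)
  have hone : (1 : Cl n) ∈ W := Submodule.subset_span ⟨∅, by simp [sprodC]⟩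
  exact eq_top_iff.mpr fun x _ => mul_one x ▸ hmul x 1 hone

instance : Module.Finite ℝ (Cl n) :=
  ⟨span_range_sprodC ▸ Submodule.fg_span (Set.finite_range _)⟩

-- Artinian rings are Dedekind-finite: this provides `mul_eq_one_comm` in `Cl n`.
instance : IsArtinianRing (Cl n) := .of_finite ℝ (Cl n)

lemma involute_listProd (l : List (Fin n)) :
    involute (listProd l) = (-1) ^ l.length * listProd l := by
  have hgen : involute ∘ gC n = Neg.neg ∘ gC n := funext fun j => involute_ι _
  unfold listProd
  rw [map_list_prod, List.map_map, hgen, ← List.map_map, List.prod_map_neg, List.length_map]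

lemma involute_eq_self_of_mem_ClE0 {x : Cl n} (hx : x ∈ ClE0 n) : involute x = x := by
  induction hx using Submodule.span_induction with
  | mem y hy =>
    obtain ⟨s, hs, rfl⟩ := hy
    rw [sprodC_eq_listProd, involute_listProd, Finset.length_sort, hs.neg_one_pow, one_mul]
  | zero => exact map_zero _
  | add a b _ _ ha hb => rw [map_add, ha, hb]
  | smul c a _ ha => rw [map_smul, ha]

-- The twisted adjoint action `y ↦ e_j α(y) e_j⁻¹` of `e_j`, using `e_j⁻¹ = -e_j`.
def twistConj (j : Fin n) : Cl n →ₐ[ℝ] Cl n :=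
  AlgHom.ofLinearMap
    (-(LinearMap.mulRight ℝ (gC n j) ∘ₗ LinearMap.mulLeft ℝ (gC n j) ∘ₗ involute.toLinearMap))
    (by simp [gC_mul_self])
    (fun x y => by
      simp only [LinearMap.neg_apply, LinearMap.comp_apply, AlgHom.toLinearMap_apply, map_mul,
        LinearMap.mulLeft_apply, LinearMap.mulRight_apply]
      calc -(gC n j * (involute x * involute y) * gC n j)
          = gC n j * involute x * (gC n j * gC n j) * involute y * gC n j := by
            rw [gC_mul_self]; noncomm_ring
        _ = _ := by noncomm_ring)

lemma twistConj_apply (j : Fin n) (y : Cl n) :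
    twistConj j y = -(gC n j * involute y * gC n j) := rfl

lemma twistConj_gC (j k : Fin n) : twistConj j (gC n k) = if k = j then -gC n k else gC n k := by
  have hinv : involute (gC n k) = -gC n k := involute_ι _
  split_ifs with h
  · subst h; simp [twistConj_apply, hinv, gC_mul_self]
  · simp [twistConj_apply, hinv, gC_mul_gC_of_ne (Ne.symm h), mul_assoc, gC_mul_self]

lemma twistConj_listProd (j : Fin n) {l : List (Fin n)} (hl : l.Nodup) :
    twistConj j (listProd l) = if j ∈ l then -listProd l else listProd l := by
  induction l with
  | nil => simp [listProd]
  | cons k t ih =>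
    obtain ⟨hkt, ht⟩ := List.nodup_cons.mp hl
    rw [listProd_cons, map_mul, twistConj_gC, ih ht]
    by_cases hjk : k = j
    · subst hjk; simp [hkt]
    · simp [hjk, Ne.symm hjk]

lemma twistConj_sprodC (j : Fin n) (s : Finset (Fin n)) :
    twistConj j (sprodC n s) = if j ∈ s then -sprodC n s else sprodC n s := by
  have h := twistConj_listProd j (Finset.sort_nodup s (· ≤ ·))
  simp only [Finset.mem_sort] at h
  exact h

lemma twistConj_eq_self {j : Fin n} {x : Cl n} (hc : Commute x (gC n j))
    (he : involute x = x) : twistConj j x = x := by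
  rw [twistConj_apply, he, ← hc.eq, mul_assoc, gC_mul_self, mul_neg_one, neg_neg]

/-- `(1 + twistConj j) / 2` fixes `x` and kills exactly the monomials containing `e_j`. -/
lemma mem_span_sprodC_disjoint {x : Cl n} (hx : ∀ j, twistConj j x = x) (T : Finset (Fin n)) :
    x ∈ Submodule.span ℝ (sprodC n '' {s | Disjoint s T}) := by
  induction T using Finset.induction_on with
  | empty => simp [Set.image_univ, span_range_sprodC]
  | insert j T _ ih =>
    have hproj :
        x + twistConj j x ∈ Submodule.span ℝ (sprodC n '' {s | Disjoint s (insert j T)}) := by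
      refine (Submodule.map_span_le (LinearMap.id + (twistConj j).toLinearMap) _ _).mpr ?_
        (Submodule.mem_map_of_mem ih)
      rintro - ⟨s, hs, rfl⟩
      by_cases hjs : j ∈ s
      · simp [twistConj_sprodC, hjs]
      · have hs' : sprodC n s ∈ Submodule.span ℝ (sprodC n '' {s | Disjoint s (insert j T)}) :=
          Submodule.subset_span ⟨s, Finset.disjoint_insert_right.mpr ⟨hjs, hs⟩, rfl⟩
        simpa [twistConj_sprodC, hjs] using Submodule.add_mem _ hs' hs'
    rw [hx j, ← two_smul ℝ] at hproj
    simpa using Submodule.smul_mem _ (2⁻¹ : ℝ) hproj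

lemma eq_algebraMap_of_commute_of_involute_eq {x : Cl n} (hc : ∀ j, Commute x (gC n j))
    (he : involute x = x) : ∃ c : ℝ, x = algebraMap ℝ (Cl n) c := by
  have hx := mem_span_sprodC_disjoint (fun j => twistConj_eq_self (hc j) he) Finset.univ
  have hsingle : {s : Finset (Fin n) | Disjoint s Finset.univ} = {∅} := by
    ext s; exact disjoint_top
  rw [hsingle, Set.image_singleton, Submodule.mem_span_singleton] at hx
  obtain ⟨c, hc⟩ := hx
  exact ⟨c, by simp [← hc, sprodC, Algebra.smul_def]⟩

lemma coeff1C_iC_mul_iC_mul_eq {g g' : Cl n} (h1 : coeff1C n g = coeff1C n g')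
    (h2 : ∀ j k : Fin n, j < k →
      coeff1C n (gC n k * gC n j * g) = coeff1C n (gC n k * gC n j * g'))
    (a b : Fin n → ℝ) : coeff1C n (iC n a * iC n b * g) = coeff1C n (iC n a * iC n b * g') := by
  let B (x : Cl n) : (Fin n → ℝ) →ₗ[ℝ] (Fin n → ℝ) →ₗ[ℝ] ℝ :=
    ((LinearMap.mul ℝ (Cl n)).compl₁₂ (ι (Qn n)) (ι (Qn n))).compr₂
      (coeff1Linear n ∘ₗ LinearMap.mulRight ℝ x)
  have hB : B g = B g' := by
    refine LinearMap.ext_basis (Pi.basisFun ℝ (Fin n)) (Pi.basisFun ℝ (Fin n)) fun k j => ?_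
    rw [Pi.basisFun_apply, Pi.basisFun_apply]
    change coeff1C n (gC n k * gC n j * g) = coeff1C n (gC n k * gC n j * g')
    rcases lt_trichotomy j k with hjk | rfl | hkj
    · exact h2 j k hjk
    · simp only [gC_mul_self, neg_one_mul, coeff1C_neg, h1]
    · simp only [gC_mul_gC_of_ne hkj.ne, neg_mul, coeff1C_neg, h2 k j hkj]
  exact LinearMap.congr_fun₂ hB a b

lemma Qn_eq_zero_iff {v : Fin n → ℝ} : Qn n v = 0 ↔ v = 0 := by
  rw [Qn_apply, neg_eq_zero, Finset.sum_eq_zero_iff_of_nonneg fun i _ => mul_self_nonneg (v i),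
    funext_iff]
  simp

lemma coeff1C_iC_mul_iC_mul_of_mul_iC {g : Cl n} {u v : Fin n → ℝ}
    (h : g * iC n v = iC n u * g) (z : Fin n → ℝ) :
    coeff1C n (iC n v * iC n z * g) = coeff1C n (iC n z * iC n u * g) := by
  rw [mul_assoc, coeff1C_mul_comm, mul_assoc, h, mul_assoc]

/-- Testing against `i(w) i(w) = -‖w‖²` with `w = u - u'` gives `‖w‖² φ(g) = 0`. -/
lemma eq_of_mul_iC {g g' : Cl n} (hg : coeff1C n g ≠ 0)
    (hbil : ∀ a b, coeff1C n (iC n a * iC n b * g) = coeff1C n (iC n a * iC n b * g'))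
    {u u' v : Fin n → ℝ} (hu : g * iC n v = iC n u * g) (hu' : g' * iC n v = iC n u' * g') :
    u = u' := by
  set w := u - u'
  have hw : coeff1C n (iC n w * iC n w * g) = 0 := by
    have hsplit : iC n w * iC n w * g = iC n w * iC n u * g - iC n w * iC n u' * g := by
      rw [show iC n w = iC n u - iC n u' from map_sub _ u u']
      noncomm_ring
    rw [hsplit, coeff1C_sub, sub_eq_zero, ← coeff1C_iC_mul_iC_mul_of_mul_iC hu, hbil,
      coeff1C_iC_mul_iC_mul_of_mul_iC hu', hbil]
  rw [iC, ι_sq_scalar, ← Algebra.smul_def, coeff1C_smul] at hw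
  exact sub_eq_zero.mp (Qn_eq_zero_iff.mp ((mul_eq_zero.mp hw).resolve_right hg))

end Cl

namespace SpinC

open Cl

variable {n : ℕ} {γ γ' : Cl n}

lemma conjC_mul_self (hγ : γ ∈ SpinC n) : conjC n γ * γ = 1 := mul_eq_one_comm.mp hγ.2.1

lemma exists_mul_iC (hγ : γ ∈ SpinC n) (v : Fin n → ℝ) : ∃ u, γ * iC n v = iC n u * γ := by
  obtain ⟨u, hu⟩ := hγ.2.2 v
  exact ⟨u, by rw [← hu, mul_assoc _ (conjC n γ), conjC_mul_self hγ, mul_one]⟩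

lemma conjC_mul_iC (hγ : γ ∈ SpinC n) {u v : Fin n → ℝ} (h : γ * iC n v = iC n u * γ) :
    conjC n γ * iC n u = iC n v * conjC n γ := by
  calc conjC n γ * iC n u = conjC n γ * (iC n u * γ) * conjC n γ := by
        rw [mul_assoc, mul_assoc, hγ.2.1, mul_one]
    _ = iC n v * conjC n γ := by rw [← h, ← mul_assoc, conjC_mul_self hγ, one_mul]

lemma involute_conjC (hγ : γ ∈ SpinC n) : involute (conjC n γ) = conjC n γ := by
  rw [conjC, ← reverse_involute, involute_involute, involute_eq_self_of_mem_ClE0 hγ.1]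

lemma exists_eq_smul (hγ : γ ∈ SpinC n) (hγ' : γ' ∈ SpinC n)
    (h : ∀ v, ∃ u, γ * iC n v = iC n u * γ ∧ γ' * iC n v = iC n u * γ') :
    ∃ c : ℝ, γ' = c • γ := by
  have hcomm (j : Fin n) : Commute (conjC n γ * γ') (gC n j) := by
    obtain ⟨u, hu, hu'⟩ := h (Pi.single j 1)
    change _ * iC n _ = iC n _ * _
    rw [mul_assoc, hu', ← mul_assoc, conjC_mul_iC hγ hu, mul_assoc]
  have heven : involute (conjC n γ * γ') = conjC n γ * γ' := by
    rw [map_mul, involute_conjC hγ, involute_eq_self_of_mem_ClE0 hγ'.1]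
  obtain ⟨c, hc⟩ := eq_algebraMap_of_commute_of_involute_eq hcomm heven
  refine ⟨c, ?_⟩
  rw [Algebra.smul_def, Algebra.commutes, ← hc, ← mul_assoc, hγ.2.1, one_mul]

end SpinC

/-- If `g, g' ∈ G_d = {r·γ : r ∈ ℝ \ {0}, γ ∈ Spin(d)}` have the same
nonzero coefficient of `1` and the same coefficient of `e_je_k` for every
`1 ≤ j < k ≤ d`, then `g = g'`. -/
theorem G_determined_by_low_coefficients (d : ℕ) (g g' : Cl d)
    (hg : ∃ r : ℝ, r ≠ 0 ∧ ∃ γ ∈ SpinC d, g = r • γ)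
    (hg' : ∃ r : ℝ, r ≠ 0 ∧ ∃ γ ∈ SpinC d, g' = r • γ)
    (h1 : coeff1C d g = coeff1C d g') (h1ne : coeff1C d g ≠ 0)
    (h2 : ∀ j k : Fin d, j < k →
      coeff1C d (gC d k * gC d j * g) = coeff1C d (gC d k * gC d j * g')) :
    g = g' := by
  obtain ⟨r, -, γ, hγ, rfl⟩ := hg
  obtain ⟨r', -, γ', hγ', rfl⟩ := hg'
  have hbil := Cl.coeff1C_iC_mul_iC_mul_eq h1 h2
  obtain ⟨c, rfl⟩ := SpinC.exists_eq_smul hγ hγ' fun v => by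
    obtain ⟨u, hu⟩ := SpinC.exists_mul_iC hγ v
    obtain ⟨u', hu'⟩ := SpinC.exists_mul_iC hγ' v
    have huu' : u = u' := Cl.eq_of_mul_iC h1ne hbil
      (by rw [smul_mul_assoc, hu, mul_smul_comm]) (by rw [smul_mul_assoc, hu', mul_smul_comm])
    exact ⟨u, hu, huu' ▸ hu'⟩
  rw [smul_smul, Cl.coeff1C_smul, Cl.coeff1C_smul] at h1
  rw [Cl.coeff1C_smul] at h1ne
  rw [smul_smul, mul_right_cancel₀ (right_ne_zero_of_mul h1ne) h1]
end
end
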